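/- Fix α > 0, σ > 0, a probability measure π* on ℝ with finite second moment, and a differentiable, strongly convex function F : ℝ → ℝ. Then for every fixed b > 0, φ(b, τ) → +∞ as τ → +∞. -/

import Mathlib

open MeasureTheory ProbabilityTheory Filter Set

/-- The scalar min-max objective
`φ(b,τ) = (b/2)(σ²/τ + τ) − b²/2
  + (1/α)·E[inf_w {(b/(2τ))w² − bZw + σ²F(w+B) − σ²F(B)}]`,
with `(B,Z) ∼ π* ⊗ N(0,1)`. -/
noncomputable def phi (α σ : ℝ) (prs : MeasureTheory.Measure ℝ) (F : ℝ → ℝ) (b τ : ℝ) : ℝ :=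
  b / 2 * (σ ^ 2 / τ + τ) - b ^ 2 / 2 +
    (1 / α) * ∫ p : ℝ × ℝ,
      sInf (Set.range fun w : ℝ =>
        b / (2 * τ) * w ^ 2 - b * p.2 * w + σ ^ 2 * F (w + p.1) - σ ^ 2 * F p.1)
      ∂(prs.prod (ProbabilityTheory.gaussianReal 0 1))

/-- Tangent-line bound for a strongly convex differentiable function. -/
lemma strong_tangent {F : ℝ → ℝ} (hFdiff : Differentiable ℝ F) {κ : ℝ}
    (hconv : ConvexOn ℝ Set.univ (fun w => F w - κ / 2 * w ^ 2)) (x y : ℝ) :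
    F x + deriv F x * (y - x) + κ / 2 * (y - x) ^ 2 ≤ F y := by
  set G : ℝ → ℝ := fun w => F w - κ / 2 * w ^ 2 with hG
  have hd : ∀ z : ℝ, HasDerivAt G (deriv F z - κ / 2 * (2 * z ^ 1)) z := by
    intro z
    exact ((hFdiff z).hasDerivAt).sub ((hasDerivAt_pow 2 z).const_mul (κ / 2))
  have key : G x + (deriv F x - κ / 2 * (2 * x ^ 1)) * (y - x) ≤ G y := by
    rcases lt_trichotomy x y with h | h | h
    · have := hconv.le_slope_of_hasDerivAt (mem_univ x) (mem_univ y) h (hd x)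
      rw [slope_def_field] at this
      have hxy : (0:ℝ) < y - x := by linarith
      calc G x + (deriv F x - κ / 2 * (2 * x ^ 1)) * (y - x)
          ≤ G x + (G y - G x) / (y - x) * (y - x) := by
            have := mul_le_mul_of_nonneg_right this hxy.le
            linarith
        _ = G y := by field_simp; ring
    · subst h; simp
    · have := hconv.slope_le_of_hasDerivAt (mem_univ y) (mem_univ x) h (hd x)
      rw [slope_def_field] at this
      have hxy : (0:ℝ) < x - y := by linarith
      have h2 : (G x - G y) / (x - y) * (x - y) ≤ (deriv F x - κ / 2 * (2 * x ^ 1)) * (x - y) :=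
        mul_le_mul_of_nonneg_right this hxy.le
      have h3 : (G x - G y) / (x - y) * (x - y) = G x - G y := by field_simp
      nlinarith
  have hGx : G x = F x - κ / 2 * x ^ 2 := rfl
  have hGy : G y = F y - κ / 2 * y ^ 2 := rfl
  rw [hGx, hGy] at key
  nlinarith [key]

/-- Midpoint strong convexity. -/
lemma strong_midpoint {F : ℝ → ℝ} {κ : ℝ}
    (hconv : ConvexOn ℝ Set.univ (fun w => F w - κ / 2 * w ^ 2)) (x y : ℝ) :
    F ((x + y) / 2) ≤ F x / 2 + F y / 2 - κ / 8 * (x - y) ^ 2 := by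
  have h := hconv.2 (mem_univ x) (mem_univ y) (by norm_num : (0:ℝ) ≤ 1/2)
    (by norm_num : (0:ℝ) ≤ 1/2) (by norm_num)
  simp only [smul_eq_mul] at h
  have hmid : (1:ℝ)/2 * x + 1/2 * y = (x + y) / 2 := by ring
  rw [hmid] at h
  nlinarith [h]

/-- `sInf` of the range of a continuous function equals the infimum over the rationals. -/
lemma csInf_range_eq_iInf_rat {g : ℝ → ℝ} (hg : Continuous g)
    (hbdd : BddBelow (Set.range g)) :
    sInf (Set.range g) = ⨅ q : ℚ, g (q : ℝ) := by
  have hbdd' : BddBelow (Set.range fun q : ℚ => g (q : ℝ)) := by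
    obtain ⟨c, hc⟩ := hbdd
    exact ⟨c, by rintro x ⟨q, rfl⟩; exact hc ⟨(q : ℝ), rfl⟩⟩
  apply le_antisymm
  · exact le_ciInf fun q => csInf_le hbdd ⟨(q : ℝ), rfl⟩
  · apply le_csInf (range_nonempty _)
    rintro x ⟨w, rfl⟩
    by_contra hcon
    push_neg at hcon
    set ε := (⨅ q : ℚ, g (q : ℝ)) - g w with hε
    have hεpos : 0 < ε := by simpa [hε] using sub_pos.mpr hcon
    obtain ⟨δ, hδpos, hδ⟩ := Metric.continuousAt_iff.mp hg.continuousAt ε hεpos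
    obtain ⟨q, hq⟩ := exists_rat_near w hδpos
    have hdist : dist (q : ℝ) w < δ := by
      rw [Real.dist_eq, abs_sub_comm]; exact hq
    have h1 : dist (g (q : ℝ)) (g w) < ε := hδ hdist
    have h2 : g (q : ℝ) < g w + ε := by
      have := abs_lt.mp (by rwa [Real.dist_eq] at h1)
      linarith [this.2]
    have h3 : (⨅ q : ℚ, g (q : ℝ)) ≤ g (q : ℝ) := ciInf_le hbdd' q
    simp only [hε] at h2
    linarith

/-- for `α > 0`, `σ > 0`, `π*` a probability measure on `ℝ` with finite second
moment, and `F` differentiable and strongly convex, for every fixed `b > 0` we have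
`φ(b,τ) → +∞` as `τ → +∞`. -/
theorem stmt17 (α σ : ℝ) (hα : 0 < α) (hσ : 0 < σ)
    (prs : Measure ℝ) [IsProbabilityMeasure prs]
    (hmom : Integrable (fun x => x ^ 2) prs)
    (F : ℝ → ℝ) (hFdiff : Differentiable ℝ F)
    (hFconv : ∃ κ > 0, ConvexOn ℝ Set.univ (fun w => F w - κ / 2 * w ^ 2))
    (b : ℝ) (hb : 0 < b) :
    Filter.Tendsto (fun τ => phi α σ prs F b τ) Filter.atTop Filter.atTop := by
  classical
  obtain ⟨κ, hκ, hconv⟩ := hFconv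
  set μ : Measure (ℝ × ℝ) := prs.prod (gaussianReal 0 1) with hμdef
  set m : ℝ := σ ^ 2 * κ with hmdef
  have hmpos : 0 < m := by positivity
  set G : ℝ → ℝ × ℝ → ℝ → ℝ := fun s p w =>
    s * w ^ 2 - b * p.2 * w + σ ^ 2 * F (w + p.1) - σ ^ 2 * F p.1 with hGdef
  have hF := hFdiff.continuous
  -- pointwise lower bound
  have hlow : ∀ s : ℝ, 0 ≤ s → ∀ p : ℝ × ℝ, ∀ w : ℝ,
      -(σ ^ 2 * deriv F p.1 - b * p.2) ^ 2 / (2 * m) ≤ G s p w := by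
    intro s hs p w
    have htan := strong_tangent hFdiff hconv p.1 (w + p.1)
    have h1 : F p.1 + deriv F p.1 * w + κ / 2 * w ^ 2 ≤ F (w + p.1) := by
      have : w + p.1 - p.1 = w := by ring
      rw [this] at htan; exact htan
    set c : ℝ := σ ^ 2 * deriv F p.1 - b * p.2 with hc
    have h2 : m / 2 * w ^ 2 + c * w ≤ G s p w := by
      have h3 : σ ^ 2 * (F p.1 + deriv F p.1 * w + κ / 2 * w ^ 2) ≤ σ ^ 2 * F (w + p.1) :=
        mul_le_mul_of_nonneg_left h1 (by positivity)
      have hsw : 0 ≤ s * w ^ 2 := mul_nonneg hs (sq_nonneg w)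
      simp only [hGdef, hmdef, hc]
      nlinarith
    have h4 : -c ^ 2 / (2 * m) ≤ m / 2 * w ^ 2 + c * w := by
      rw [div_le_iff₀ (by positivity : (0:ℝ) < 2 * m)]
      have hexp : (m / 2 * w ^ 2 + c * w) * (2 * m) = (m * w + c) ^ 2 - c ^ 2 := by ring
      rw [hexp]
      linarith [sq_nonneg (m * w + c)]
    linarith
  have hbdd : ∀ s : ℝ, 0 ≤ s → ∀ p : ℝ × ℝ, BddBelow (Set.range (G s p)) := by
    intro s hs p
    exact ⟨-(σ ^ 2 * deriv F p.1 - b * p.2) ^ 2 / (2 * m), by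
      rintro x ⟨w, rfl⟩; exact hlow s hs p w⟩
  have hzero : ∀ s : ℝ, ∀ p : ℝ × ℝ, G s p 0 = 0 := by
    intro s p; simp [hGdef]
  have hnonpos : ∀ s : ℝ, 0 ≤ s → ∀ p : ℝ × ℝ, sInf (Set.range (G s p)) ≤ 0 := by
    intro s hs p
    have := csInf_le (hbdd s hs p) ⟨0, rfl⟩
    rwa [hzero s p] at this
  -- Ψ : the τ-independent infimum
  set Ψ : ℝ × ℝ → ℝ := fun p => sInf (Set.range (G 0 p)) with hΨdef
  -- Ψ ≤ f_s for s ≥ 0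
  have hΨle : ∀ s : ℝ, 0 ≤ s → ∀ p : ℝ × ℝ, Ψ p ≤ sInf (Set.range (G s p)) := by
    intro s hs p
    apply le_csInf (range_nonempty _)
    rintro x ⟨w, rfl⟩
    calc Ψ p ≤ G 0 p w := csInf_le (hbdd 0 le_rfl p) ⟨w, rfl⟩
      _ ≤ G s p w := by
          simp only [hGdef]
          nlinarith [mul_nonneg hs (sq_nonneg w)]
  -- 2 f_s ≤ Ψ for 0 ≤ s ≤ m/2
  have h2f : ∀ s : ℝ, 0 ≤ s → s ≤ m / 2 → ∀ p : ℝ × ℝ,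
      2 * sInf (Set.range (G s p)) ≤ Ψ p := by
    intro s hs hsm p
    apply le_csInf (range_nonempty _)
    rintro x ⟨w, rfl⟩
    have hmem : sInf (Set.range (G s p)) ≤ G s p (w / 2) := csInf_le (hbdd s hs p) ⟨w / 2, rfl⟩
    have hmid := strong_midpoint hconv (w + p.1) p.1
    have hm1 : (w + p.1 + p.1) / 2 = w / 2 + p.1 := by ring
    rw [hm1] at hmid
    have hm2 : σ ^ 2 * F (w / 2 + p.1) ≤
        σ ^ 2 * (F (w + p.1) / 2 + F p.1 / 2 - κ / 8 * w ^ 2) := by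
      apply mul_le_mul_of_nonneg_left _ (by positivity : (0:ℝ) ≤ σ ^ 2)
      have : (w + p.1 - p.1) ^ 2 = w ^ 2 := by ring
      rw [this] at hmid; exact hmid
    have hkey : 2 * G s p (w / 2) ≤ G 0 p w := by
      have hmul : s * w ^ 2 ≤ m / 2 * w ^ 2 := mul_le_mul_of_nonneg_right hsm (sq_nonneg w)
      simp only [hGdef, hmdef] at hm2 hmul ⊢
      nlinarith [hm2, hmul]
    exact (by linarith : 2 * sInf (Set.range (G s p)) ≤ 2 * G s p (w / 2)).trans hkey
  -- measurability
  have hGcont : ∀ s : ℝ, ∀ w : ℝ, Continuous fun p : ℝ × ℝ => G s p w := by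
    intro s w
    simp only [hGdef]
    fun_prop
  have hGwcont : ∀ s : ℝ, ∀ p : ℝ × ℝ, Continuous (G s p) := by
    intro s p
    simp only [hGdef]
    fun_prop
  have hmeas : ∀ s : ℝ, 0 ≤ s → Measurable fun p : ℝ × ℝ => sInf (Set.range (G s p)) := by
    intro s hs
    have heq : (fun p : ℝ × ℝ => sInf (Set.range (G s p)))
        = fun p => ⨅ q : ℚ, G s p (q : ℝ) := by
      funext p
      exact csInf_range_eq_iInf_rat (hGwcont s p) (hbdd s hs p)
    rw [heq]
    exact Measurable.iInf fun q => (hGcont s (q : ℝ)).measurable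
  -- the uniform lower bound on the integral
  set C : ℝ := min 0 (∫ p, Ψ p ∂μ) with hCdef
  have hCle : C ≤ 0 := min_le_left _ _
  have hIbound : ∀ τ : ℝ, max 1 (b / m) ≤ τ →
      C ≤ ∫ p, sInf (Set.range (G (b / (2 * τ)) p)) ∂μ := by
    intro τ hτ
    have hτ1 : (1:ℝ) ≤ τ := le_trans (le_max_left _ _) hτ
    have hτpos : 0 < τ := lt_of_lt_of_le one_pos hτ1
    have hs0 : 0 ≤ b / (2 * τ) := by positivity
    have hsm : b / (2 * τ) ≤ m / 2 := by
      have hbm : b / m ≤ τ := le_trans (le_max_right _ _) hτ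
      rw [div_le_div_iff₀ (by positivity) (by norm_num)]
      have : b ≤ m * τ := by
        rwa [div_le_iff₀ hmpos, mul_comm] at hbm
      nlinarith
    set f : ℝ × ℝ → ℝ := fun p => sInf (Set.range (G (b / (2 * τ)) p)) with hfdef
    by_cases hint : Integrable f μ
    · -- then Ψ is integrable and ∫ f ≥ ∫ Ψ ≥ C
      have hΨf : ∀ p, Ψ p ≤ f p := fun p => hΨle _ hs0 p
      have h2fΨ : ∀ p, 2 * f p ≤ Ψ p := fun p => h2f _ hs0 hsm p
      have hΨ0 : ∀ p, Ψ p ≤ 0 := fun p => hnonpos 0 le_rfl p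
      have hf0 : ∀ p, f p ≤ 0 := fun p => hnonpos _ hs0 p
      have hΨint : Integrable Ψ μ := by
        refine (hint.const_mul 2).mono ((hmeas 0 le_rfl).aestronglyMeasurable) ?_
        refine Filter.Eventually.of_forall fun p => ?_
        rw [Real.norm_eq_abs, Real.norm_eq_abs, abs_of_nonpos (hΨ0 p),
          abs_of_nonpos (by nlinarith [hf0 p] : 2 * f p ≤ 0)]
        linarith [h2fΨ p]
      have hmono : ∫ p, Ψ p ∂μ ≤ ∫ p, f p ∂μ := integral_mono hΨint hint hΨf
      exact le_trans (min_le_right _ _) hmono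
    · rw [integral_undef hint]
      exact hCle
  -- conclude
  have hmain : ∀ τ : ℝ, max 1 (b / m) ≤ τ →
      b / 2 * τ + (-(b ^ 2 / 2) + 1 / α * C) ≤ phi α σ prs F b τ := by
    intro τ hτ
    have hτ1 : (1:ℝ) ≤ τ := le_trans (le_max_left _ _) hτ
    have hτpos : 0 < τ := lt_of_lt_of_le one_pos hτ1
    have h1 : b / 2 * τ ≤ b / 2 * (σ ^ 2 / τ + τ) := by
      have : 0 ≤ σ ^ 2 / τ := by positivity
      nlinarith
    have h2 : 1 / α * C ≤ 1 / α * ∫ p, sInf (Set.range (G (b / (2 * τ)) p)) ∂μ :=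
      mul_le_mul_of_nonneg_left (hIbound τ hτ) (by positivity)
    have hphi : phi α σ prs F b τ = b / 2 * (σ ^ 2 / τ + τ) - b ^ 2 / 2 +
        1 / α * ∫ p, sInf (Set.range (G (b / (2 * τ)) p)) ∂μ := rfl
    rw [hphi]
    linarith
  have htend : Tendsto (fun τ : ℝ => b / 2 * τ + (-(b ^ 2 / 2) + 1 / α * C)) atTop atTop := by
    apply tendsto_atTop_add_const_right
    exact Tendsto.const_mul_atTop (by positivity : (0:ℝ) < b / 2) tendsto_id
  apply tendsto_atTop_mono' _ _ htend
  filter_upwards [eventually_ge_atTop (max 1 (b / m))] with τ hτ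
  exact hmain τ hτ
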